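/- arXiv:1501.01506 — 3 statements merged into one kernel-verified Lean document; each statement's English description precedes it below -/
import Mathlib

section
/- Let T ≥ 2, α ∈ ℝ, β := α - 1, and θ_j^T := (T+1-j) - (T-j)α. Define the symmetric T×T matrix A_T by: a_{ii} = 1/2 + β² ∑_{j=i}^{T-1} θ_{j+1}^T α^{2j-2i} for 1 ≤ i ≤ T-1; a_{TT} = 1/2; a_{ik} = (β θ_i^T α^{i-k-1})/2 + β² ∑_{j=i}^{T-1} θ_{j+1}^T α^{2j-i-k} for 1 ≤ k < i ≤ T-1; a_{Tk} = (β α^{T-k-1})/2 for 1 ≤ k ≤ T-1. Then for every n with 2 ≤ n ≤ T, a_{1,n} - β ∑_{i=2}^{T} a_{i,n} = 0. -/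
/-! Write `β = α - 1` and `ℓ v = v 1 - β * ∑_{i=2}^T v i`. For the vectors `u_j i = α ^ (j - i)`
(`i ≤ j`, zero otherwise) a geometric sum gives `ℓ u_j = 1` when `1 ≤ j ≤ T`, and `ℓ e_k = -β` for
the unit vectors with `2 ≤ k ≤ T`. Column `n` of `A_T` is
`(β θ_n / 2) u_{n-1} + e_n / 2 + ∑_{j=n}^{T-1} θ_{j+1} α^(j-n) (β/2 e_{j+1} + β² u_j)`,
so its image under `ℓ` is `β θ_n / 2 - β / 2 + (β² / 2) ∑_{j=n}^{T-1} θ_{j+1} α^(j-n)`.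
As `θ_j = 1 - (T - j) β`, this vanishes because the last sum equals `T - n`. -/

open Finset

/-- θ_j^T = (T+1-j) - (T-j)α. -/
noncomputable def theta (α : ℝ) (T j : ℕ) : ℝ := ((T : ℝ) + 1 - j) - ((T : ℝ) - j) * α

/-- Entry a_{ik} of the matrix A_T, for 1-based indices with k ≤ i. -/
noncomputable def entryLow (α : ℝ) (T i k : ℕ) : ℝ :=
  if i = k then
    (if i = T then (1 : ℝ) / 2
     else 1 / 2 + (α - 1) ^ 2 * ∑ j ∈ Finset.Icc i (T - 1), theta α T (j + 1) * α ^ (2 * j - 2 * i))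
  else if i = T then (α - 1) * α ^ (T - k - 1) / 2
  else (α - 1) * theta α T i * α ^ (i - k - 1) / 2
        + (α - 1) ^ 2 * ∑ j ∈ Finset.Icc i (T - 1), theta α T (j + 1) * α ^ (2 * j - i - k)

/-- Entry a_{ik} of A_T (extended symmetrically), 1-based indices. -/
noncomputable def entryA (α : ℝ) (T i k : ℕ) : ℝ :=
  if k ≤ i then entryLow α T i k else entryLow α T k i

/-- The symmetric T×T matrix A_T. -/
noncomputable def Amat (α : ℝ) (T : ℕ) : Matrix (Fin T) (Fin T) ℝ :=
  fun i k => entryA α T (i.1 + 1) (k.1 + 1)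

lemma theta_self (α : ℝ) (T : ℕ) : theta α T T = 1 := by
  simp [theta]

lemma theta_succ (α : ℝ) (T j : ℕ) : theta α (T + 1) j = theta α T j - (α - 1) := by
  simp only [theta]; push_cast; ring

lemma sum_range_theta_mul_pow (α : ℝ) (n m : ℕ) :
    ∑ k ∈ range m, theta α (n + m) (n + k + 1) * α ^ k = m := by
  induction m with
  | zero => simp
  | succ m ih =>
    have hgeom : (∑ k ∈ range m, α ^ k) * (α - 1) = α ^ m - 1 := geom_sum_mul α m
    rw [sum_range_succ, ← add_assoc, theta_self]
    simp only [theta_succ, sub_mul _ (α - 1), sum_sub_distrib, ← mul_sum, ih]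
    push_cast
    linear_combination -hgeom

lemma sum_Ico_theta_mul_pow (α : ℝ) {n T : ℕ} (hnT : n ≤ T) :
    ∑ j ∈ Ico n T, theta α T (j + 1) * α ^ (j - n) = (T : ℝ) - n := by
  obtain ⟨m, rfl⟩ := Nat.exists_eq_add_of_le hnT
  simp only [sum_Ico_eq_sum_range, Nat.add_sub_cancel_left, sum_range_theta_mul_pow]
  push_cast
  ring

noncomputable def rowSumForm (β : ℝ) (T : ℕ) : (ℕ → ℝ) →ₗ[ℝ] ℝ :=
  LinearMap.proj 1 - β • ∑ i ∈ Icc 2 T, LinearMap.proj i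

lemma rowSumForm_apply (β : ℝ) (T : ℕ) (v : ℕ → ℝ) :
    rowSumForm β T v = v 1 - β * ∑ i ∈ Icc 2 T, v i := by
  simp [rowSumForm]

lemma rowSumForm_congr {β : ℝ} {T : ℕ} {v w : ℕ → ℝ} (hT : 1 ≤ T)
    (h : ∀ i ∈ Icc 1 T, v i = w i) : rowSumForm β T v = rowSumForm β T w := by
  simp only [rowSumForm_apply]
  rw [h 1 (by simpa using hT), sum_congr rfl fun i hi => h i (by simp at hi ⊢; omega)]

lemma rowSumForm_single (β : ℝ) {T k : ℕ} (hk : k ∈ Icc 2 T) :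
    rowSumForm β T (Pi.single k 1) = -β := by
  have hk1 : k ≠ 1 := by simp at hk; omega
  simp [rowSumForm_apply, Pi.single_apply, hk1, hk]

noncomputable def powVec (α : ℝ) (j : ℕ) : ℕ → ℝ := fun i => if i ≤ j then α ^ (j - i) else 0

lemma rowSumForm_powVec (α : ℝ) {T j : ℕ} (hj : 1 ≤ j) (hjT : j ≤ T) :
    rowSumForm (α - 1) T (powVec α j) = 1 := by
  obtain ⟨m, rfl⟩ := Nat.exists_eq_add_of_le' hj
  have hsum : ∑ i ∈ Icc 2 T, powVec α (m + 1) i = ∑ k ∈ range m, α ^ k := by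
    have hfilter : {i ∈ Icc 2 T | i ≤ m + 1} = Ico 2 (m + 2) := by
      ext i; simp only [mem_filter, mem_Icc, mem_Ico]; omega
    simp only [powVec]
    rw [← sum_filter, hfilter, sum_Ico_eq_sum_range, ← sum_range_reflect]
    exact sum_congr (by simp) fun k hk => by rw [mem_range] at hk; congr 1; omega
  rw [rowSumForm_apply, hsum, powVec, if_pos hj, Nat.add_sub_cancel, mul_comm, geom_sum_mul]
  ring

-- The diagonal and the last row fit the generic formula: `2j - i - k = (j - i) + (j - k)`, `θ_T = 1`.
lemma entryLow_eq (α : ℝ) {T i k : ℕ} (hki : k ≤ i) :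
    entryLow α T i k =
      (if i = k then 1 / 2 else (α - 1) * theta α T i * α ^ (i - k - 1) / 2) +
        (α - 1) ^ 2 * ∑ j ∈ Ico i T, theta α T (j + 1) * α ^ (j - i) * α ^ (j - k) := by
  by_cases hiT : i = T
  · subst hiT
    by_cases hik : i = k <;> simp [entryLow, hik, theta_self]
  have hIcc : Icc i (T - 1) = Ico i T := by ext j; simp only [mem_Icc, mem_Ico]; omega
  have hsum (e : ℕ → ℕ) (he : ∀ j ∈ Ico i T, e j = (j - i) + (j - k)) :
      ∑ j ∈ Icc i (T - 1), theta α T (j + 1) * α ^ e j =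
        ∑ j ∈ Ico i T, theta α T (j + 1) * α ^ (j - i) * α ^ (j - k) := by
    rw [hIcc]
    exact sum_congr rfl fun j hj => by rw [he j hj, pow_add, mul_assoc]
  by_cases hik : i = k
  · subst hik
    simp only [entryLow, if_true, if_neg hiT]
    rw [hsum _ fun j hj => by simp only [mem_Ico] at hj; omega]
  · simp only [entryLow, if_neg hik, if_neg hiT]
    rw [hsum _ fun j hj => by simp only [mem_Ico] at hj; omega]

lemma entryA_of_le (α : ℝ) {T i k : ℕ} (h : i ≤ k) : entryA α T i k = entryLow α T k i := by
  unfold entryA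
  split_ifs with hki
  · obtain rfl := le_antisymm h hki; rfl
  · rfl

noncomputable def columnDecomp (α : ℝ) (T n : ℕ) : ℕ → ℝ :=
  ((α - 1) * theta α T n / 2) • powVec α (n - 1) + (1 / 2 : ℝ) • (Pi.single n 1 : ℕ → ℝ) +
    ∑ j ∈ Ico n T, (theta α T (j + 1) * α ^ (j - n)) •
      (((α - 1) / 2) • (Pi.single (j + 1) 1 : ℕ → ℝ) + (α - 1) ^ 2 • powVec α j)

lemma entryA_eq_columnDecomp (α : ℝ) {T n i : ℕ} (hn : 1 ≤ n) (hiT : i ≤ T) :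
    entryA α T i n = columnDecomp α T n i := by
  simp only [columnDecomp, Pi.add_apply, Pi.smul_apply, Finset.sum_apply, smul_eq_mul,
    Pi.single_apply, powVec]
  rcases le_or_gt i n with hin | hni
  · rw [entryA_of_le α hin, entryLow_eq α hin]
    have hsum : ∑ j ∈ Ico n T, theta α T (j + 1) * α ^ (j - n) * α ^ (j - i) * (α - 1) ^ 2 =
        ∑ j ∈ Ico n T, theta α T (j + 1) * α ^ (j - n) *
          ((α - 1) / 2 * (if i = j + 1 then 1 else 0) +
            (α - 1) ^ 2 * (if i ≤ j then α ^ (j - i) else 0)) := by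
      refine sum_congr rfl fun j hj => ?_
      rw [mem_Ico] at hj
      rw [if_neg (by omega), if_pos (by omega)]
      ring
    rw [← hsum, mul_comm _ (∑ j ∈ _, _), sum_mul]
    rcases hin.eq_or_lt with rfl | hlt
    · rw [if_pos rfl, if_neg (by omega), if_pos rfl]; ring
    · rw [if_neg hlt.ne', if_pos (by omega), if_neg hlt.ne, show n - 1 - i = n - i - 1 by omega]
      ring
  · rw [entryA, if_pos hni.le, entryLow_eq α hni.le, if_neg hni.ne', if_neg (by omega),
      if_neg hni.ne']
    have hhalf : ∑ j ∈ Ico n T, theta α T (j + 1) * α ^ (j - n) *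
        ((α - 1) / 2 * if i = j + 1 then 1 else 0) = (α - 1) * theta α T i * α ^ (i - n - 1) / 2 := by
      rw [sum_eq_single_of_mem (i - 1) (by rw [mem_Ico]; omega) fun j _ hj => by
        rw [if_neg (by omega), mul_zero, mul_zero]]
      rw [if_pos (by omega), Nat.sub_add_cancel (by omega), Nat.sub_right_comm]
      ring
    have hpow : ∑ j ∈ Ico n T, theta α T (j + 1) * α ^ (j - n) *
        ((α - 1) ^ 2 * if i ≤ j then α ^ (j - i) else 0) =
        (α - 1) ^ 2 * ∑ j ∈ Ico i T, theta α T (j + 1) * α ^ (j - i) * α ^ (j - n) := by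
      rw [← Ico_filter_le_of_left_le hni.le, sum_filter, mul_sum]
      refine sum_congr rfl fun j _ => ?_
      split_ifs <;> ring
    simp only [mul_add, sum_add_distrib, hhalf, hpow]
    ring

lemma rowSumForm_columnDecomp (α : ℝ) {T n : ℕ} (hn : 2 ≤ n) (hnT : n ≤ T) :
    rowSumForm (α - 1) T (columnDecomp α T n) = 0 := by
  have hcoeff (j : ℕ) (hj : j ∈ Ico n T) :
      (α - 1) / 2 * rowSumForm (α - 1) T (Pi.single (j + 1) 1) +
        (α - 1) ^ 2 * rowSumForm (α - 1) T (powVec α j) = (α - 1) ^ 2 / 2 := by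
    rw [mem_Ico] at hj
    rw [rowSumForm_single _ (by rw [mem_Icc]; omega), rowSumForm_powVec α (by omega) hj.2.le]
    ring
  simp only [columnDecomp, map_add, map_smul, map_sum, smul_eq_mul]
  rw [rowSumForm_powVec α (by omega) (by omega), rowSumForm_single _ (by rw [mem_Icc]; omega),
    sum_congr rfl fun j hj => by rw [hcoeff j hj], ← sum_mul, sum_Ico_theta_mul_pow α hnT, theta]
  ring

theorem row_sum_zero_general (α : ℝ) (T n : ℕ) (hn2 : 2 ≤ n) (hnT : n ≤ T) :
    entryA α T 1 n - (α - 1) * ∑ i ∈ Finset.Icc 2 T, entryA α T i n = 0 := by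
  rw [← rowSumForm_apply (α - 1) T fun i => entryA α T i n,
    rowSumForm_congr (by omega) fun i hi => entryA_eq_columnDecomp α (by omega) (mem_Icc.1 hi).2]
  exact rowSumForm_columnDecomp α hn2 hnT

/-- Row-sum lemma: a_{1,n} - β ∑_{i=2}^{T} a_{i,n} = 0 for 2 ≤ n ≤ T. -/
theorem row_sum_zero (α : ℝ) (T n : ℕ) (hT : 2 ≤ T) (hn2 : 2 ≤ n) (hnT : n ≤ T) :
    entryA α T 1 n - (α - 1) * ∑ i ∈ Finset.Icc 2 T, entryA α T i n = 0 :=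
  row_sum_zero_general α T n hn2 hnT
end

section
/- For T ≥ 2 the determinant of A_T satisfies det A_T = ((1 + β²(T-1))/2) · det A_{T-1}. -/
open Finset

/-!
Subtracting β times the sum of columns 2, …, T from the first column of A_T leaves
c · e₁ with c = (1 + β²(T-1))/2; expanding along that column gives c times the lower-right
minor, and that minor is A_{T-1} because θ^{T}_{j+1} = θ^{T-1}_j.

For the column identity write a_{ii} = 1/2 + β² s_i and a_{ik} = α^{i-k-1} u_i for k < i,
where s_i = ∑_{j ≥ i} θ_{j+1} α^{2(j-i)} (`tailSum`) and u_i = β θ_i / 2 + α β² s_i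
(`rowFactor`). After summing a geometric series, every row reduces to
β s_i - β(T-i)/2 = ∑_{m > i} α^{m-i-1} u_m, which follows by downward induction on i from
s_i = θ_{i+1} + α² s_{i+1}.
-/

namespace Matrix

variable {R : Type*} [CommRing R]

theorem det_eq_mul_det_submatrix_succ_of_col_zero {n : ℕ}
    (M : Matrix (Fin (n + 1)) (Fin (n + 1)) R) (x c : R)
    (h : ∀ i, M i 0 = x * ∑ j : Fin n, M i j.succ + if i = 0 then c else 0) :
    M.det = c * (M.submatrix Fin.succ Fin.succ).det := by
  set N := M.updateCol 0 (fun i => if i = 0 then c else 0)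
  have hM : M = N.updateCol 0
      (fun k => ∑ i, (Fin.cons 1 fun _ => x : Fin (n + 1) → R) i • N k i) := by
    ext k l
    refine Fin.cases ?_ (fun l => ?_) l
    · simp [N, Fin.sum_univ_succ, h k, mul_sum, add_comm]
    · simp [N]
  have hN : N.det = c * (M.submatrix Fin.succ Fin.succ).det := by
    rw [det_succ_column_zero, Fintype.sum_eq_single 0]
    · have hsub : N.submatrix Fin.succ Fin.succ = M.submatrix Fin.succ Fin.succ := by
        ext i j
        simp [N]
      simp [N, hsub]
    · intro i hi
      simp [N, hi]
  calc M.det = _ := congrArg det hM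
    _ = c * (M.submatrix Fin.succ Fin.succ).det := by rw [det_updateCol_sum, hN]; simp

end Matrix

noncomputable def tailSum (α : ℝ) (T i : ℕ) : ℝ :=
  ∑ k ∈ range (T - i), theta α T (i + k + 1) * α ^ (2 * k)

noncomputable def rowFactor (α : ℝ) (T i : ℕ) : ℝ :=
  (α - 1) * theta α T i / 2 + α * (α - 1) ^ 2 * tailSum α T i

lemma theta_succ_succ (α : ℝ) (T j : ℕ) : theta α (T + 1) (j + 1) = theta α T j := by
  unfold theta; push_cast; ring

lemma tailSum_self (α : ℝ) (T : ℕ) : tailSum α T T = 0 := by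
  simp [tailSum]

lemma tailSum_eq_theta_add (α : ℝ) {T i : ℕ} (h : i < T) :
    tailSum α T i = theta α T (i + 1) + α ^ 2 * tailSum α T (i + 1) := by
  obtain ⟨n, hn⟩ : ∃ n, T - i = n + 1 := ⟨T - i - 1, by omega⟩
  rw [tailSum, tailSum, hn, show T - (i + 1) = n by omega, sum_range_succ', mul_sum, add_comm]
  congr 1
  · simp
  · refine sum_congr rfl fun k _ => ?_
    rw [show i + (k + 1) + 1 = i + 1 + k + 1 by ring]
    ring

lemma tailSum_succ_succ (α : ℝ) (T i : ℕ) : tailSum α (T + 1) (i + 1) = tailSum α T i := by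
  simp only [tailSum, Nat.add_sub_add_right, show ∀ k, i + 1 + k + 1 = i + k + 1 + 1 by omega,
    theta_succ_succ]

lemma rowFactor_succ_succ (α : ℝ) (T i : ℕ) :
    rowFactor α (T + 1) (i + 1) = rowFactor α T i := by
  rw [rowFactor, rowFactor, theta_succ_succ, tailSum_succ_succ]

lemma sum_Icc_sub_one_eq_sum_range {M : Type*} [AddCommMonoid M] (f : ℕ → M) {i T : ℕ}
    (hT : 0 < T) :
    ∑ j ∈ Icc i (T - 1), f j = ∑ k ∈ range (T - i), f (i + k) := by
  rw [← sum_Ico_eq_sum_range]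
  congr 1
  ext j
  simp only [mem_Icc, mem_Ico]
  omega

lemma entryLow_self (α : ℝ) {T i : ℕ} (hi : 1 ≤ i) (hiT : i ≤ T) :
    entryLow α T i i = 1 / 2 + (α - 1) ^ 2 * tailSum α T i := by
  rw [entryLow, if_pos rfl]
  split_ifs with h
  · simp [h, tailSum_self]
  · rw [sum_Icc_sub_one_eq_sum_range _ (by omega), tailSum]
    congr 2
    refine sum_congr rfl fun k _ => ?_
    rw [show 2 * (i + k) - 2 * i = 2 * k by omega]

lemma entryLow_of_lt (α : ℝ) {T i k : ℕ} (hki : k < i) (hiT : i ≤ T) :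
    entryLow α T i k = α ^ (i - k - 1) * rowFactor α T i := by
  rw [entryLow, if_neg hki.ne', rowFactor]
  split_ifs with h
  · subst h
    rw [theta_self, tailSum_self]
    ring
  · have hsum : ∑ j ∈ Icc i (T - 1), theta α T (j + 1) * α ^ (2 * j - i - k)
        = α ^ (i - k - 1) * α * tailSum α T i := by
      rw [sum_Icc_sub_one_eq_sum_range _ (by omega), tailSum, mul_sum]
      refine sum_congr rfl fun j _ => ?_
      rw [show 2 * (i + j) - i - k = (i - k - 1) + 1 + 2 * j by omega, pow_add, pow_succ]
      ring
    rw [hsum]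
    ring

lemma entryA_self (α : ℝ) {T i : ℕ} (hi : 1 ≤ i) (hiT : i ≤ T) :
    entryA α T i i = 1 / 2 + (α - 1) ^ 2 * tailSum α T i := by
  rw [entryA, if_pos le_rfl, entryLow_self α hi hiT]

lemma entryA_of_lt (α : ℝ) {T i k : ℕ} (hki : k < i) (hiT : i ≤ T) :
    entryA α T i k = α ^ (i - k - 1) * rowFactor α T i := by
  rw [entryA, if_pos hki.le, entryLow_of_lt α hki hiT]

lemma entryA_of_gt (α : ℝ) {T i k : ℕ} (hik : i < k) (hkT : k ≤ T) :
    entryA α T i k = α ^ (k - i - 1) * rowFactor α T k := by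
  rw [entryA, if_neg (not_le.mpr hik), entryLow_of_lt α hik hkT]

lemma entryA_succ_succ (α : ℝ) {S i k : ℕ} (hi : 1 ≤ i) (hiS : i ≤ S) (hkS : k ≤ S) :
    entryA α (S + 1) (i + 1) (k + 1) = entryA α S i k := by
  rcases lt_trichotomy i k with h | rfl | h
  · rw [entryA_of_gt α h hkS, entryA_of_gt α (by omega) (by omega), rowFactor_succ_succ,
      Nat.add_sub_add_right]
  · rw [entryA_self α hi hiS, entryA_self α (by omega) (by omega), tailSum_succ_succ]
  · rw [entryA_of_lt α h hiS, entryA_of_lt α (by omega) (by omega), rowFactor_succ_succ,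
      Nat.add_sub_add_right]

lemma Amat_submatrix_succ_succ (α : ℝ) (S : ℕ) :
    (Amat α (S + 1)).submatrix Fin.succ Fin.succ = Amat α S := by
  ext i k
  simp only [Amat, Matrix.submatrix_apply, Fin.val_succ]
  exact entryA_succ_succ α (by omega) i.2 k.2

lemma sum_pow_mul_rowFactor (α : ℝ) {T : ℕ} (n i : ℕ) (hi : i + n = T) :
    ∑ k ∈ range n, α ^ k * rowFactor α T (i + 1 + k)
      = (α - 1) * tailSum α T i - (α - 1) * n / 2 := by
  induction n generalizing i with
  | zero => simp [← hi, tailSum_self]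
  | succ n ih =>
    have hshift : ∑ k ∈ range n, α ^ (k + 1) * rowFactor α T (i + 1 + (k + 1))
        = α * ∑ k ∈ range n, α ^ k * rowFactor α T (i + 1 + 1 + k) := by
      rw [mul_sum]
      refine sum_congr rfl fun k _ => ?_
      rw [show i + 1 + (k + 1) = i + 1 + 1 + k by omega]
      ring
    rw [sum_range_succ', hshift, ih (i + 1) (by omega), tailSum_eq_theta_add α (by omega : i < T),
      rowFactor]
    subst hi
    unfold theta
    push_cast
    ring

lemma entryA_one_one (α : ℝ) (S : ℕ) :
    entryA α (S + 1) 1 1 = (α - 1) * ∑ k ∈ range S, entryA α (S + 1) 1 (k + 2)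
      + (1 + (α - 1) ^ 2 * (S : ℝ)) / 2 := by
  have hrow : ∀ k ∈ range S,
      entryA α (S + 1) 1 (k + 2) = α ^ k * rowFactor α (S + 1) (1 + 1 + k) := by
    intro k hk
    rw [mem_range] at hk
    rw [entryA_of_gt α (by omega) (by omega), show k + 2 - 1 - 1 = k by omega,
      show 1 + 1 + k = k + 2 by omega]
  rw [sum_congr rfl hrow, sum_pow_mul_rowFactor α S 1 (by omega),
    entryA_self α le_rfl (by omega)]
  ring

lemma entryA_one_of_two_le (α : ℝ) {T p : ℕ} (hp : p + 2 ≤ T) :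
    entryA α T (p + 2) 1 = (α - 1) * ∑ k ∈ range (T - 1), entryA α T (p + 2) (k + 2) := by
  obtain ⟨n, rfl⟩ : ∃ n, T = p + 2 + n := ⟨T - (p + 2), by omega⟩
  set T := p + 2 + n with hT
  have hbelow : ∑ k ∈ range p, entryA α T (p + 2) (k + 2)
      = (∑ k ∈ range p, α ^ k) * rowFactor α T (p + 2) := by
    rw [← sum_range_reflect, sum_mul]
    refine sum_congr rfl fun k hk => ?_
    rw [mem_range] at hk
    rw [entryA_of_lt α (by omega) hp, show p + 2 - (p - 1 - k + 2) - 1 = k by omega]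
  have habove : ∑ k ∈ range n, entryA α T (p + 2) (p + 1 + k + 2)
      = ∑ k ∈ range n, α ^ k * rowFactor α T (p + 2 + 1 + k) := by
    refine sum_congr rfl fun k hk => ?_
    rw [mem_range] at hk
    rw [entryA_of_gt α (by omega) (by omega), show p + 1 + k + 2 - (p + 2) - 1 = k by omega,
      show p + 1 + k + 2 = p + 2 + 1 + k by omega]
  have hθ : theta α T (p + 2) = 1 - (α - 1) * n := by
    rw [hT, theta]
    push_cast
    ring
  rw [show T - 1 = p + 1 + n by omega, sum_range_add, sum_range_succ, hbelow, habove,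
    sum_pow_mul_rowFactor α n (p + 2) rfl, entryA_self α (by omega) hp,
    entryA_of_lt α (by omega) hp, show p + 2 - 1 - 1 = p by omega, rowFactor, hθ]
  linear_combination -((α - 1) * (1 - (α - 1) * n) / 2 + α * (α - 1) ^ 2 * tailSum α T (p + 2))
    * geom_sum_mul α p

lemma Amat_apply_zero (α : ℝ) (S : ℕ) (i : Fin (S + 1)) :
    Amat α (S + 1) i 0 = (α - 1) * ∑ j : Fin S, Amat α (S + 1) i j.succ
      + if i = 0 then (1 + (α - 1) ^ 2 * (S : ℝ)) / 2 else 0 := by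
  have hsum : ∑ j : Fin S, Amat α (S + 1) i j.succ
      = ∑ k ∈ range S, entryA α (S + 1) (i + 1) (k + 2) :=
    Fin.sum_univ_eq_sum_range (fun k => entryA α (S + 1) (i + 1) (k + 2)) S
  rw [hsum]
  induction i using Fin.cases with
  | zero => simpa [Amat] using entryA_one_one α S
  | succ p =>
    rw [if_neg (Fin.succ_ne_zero p), add_zero]
    simpa [Amat] using entryA_one_of_two_le α (by omega : p.1 + 2 ≤ S + 1)

theorem det_recursion_general (α : ℝ) (S : ℕ) :
    (Amat α (S + 1)).det = (1 + (α - 1) ^ 2 * (S : ℝ)) / 2 * (Amat α S).det := by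
  rw [Matrix.det_eq_mul_det_submatrix_succ_of_col_zero _ (α - 1) _ (Amat_apply_zero α S),
    Amat_submatrix_succ_succ]

/-- det A_T = ((1 + β²(T-1))/2) det A_{T-1} for T = S+1 ≥ 2. -/
theorem det_recursion (α : ℝ) (S : ℕ) (hS : 1 ≤ S) :
    (Amat α (S + 1)).det = (1 + (α - 1) ^ 2 * (S : ℝ)) / 2 * (Amat α S).det :=
  det_recursion_general α S
end

section
/- For the recursion θ_k = (1 - (T-k)β) (with β = α - 1), the solutions of the system (1-β)η_{k+1} - η_k - β² ∑_{j=k+2}^{T} η_j α^{j-k-2} = 0 for k = 1,…,T-1 satisfy η_k = (1 - (T-k)β) η_T for all 1 ≤ k ≤ T. -/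
/-! With β = α - 1, one checks ∑_{i<d} (1 - (d-1-i)β) α^i = d, since lowering the
coefficients by β subtracts β ∑_{i<d} α^i = α^d - 1. Hence if η_j = (1 - (T-j)β) η_T for all
j > k, the tail sum in the k-th equation equals (T-k-1) η_T, and the equation gives
η_k = ((1-β)(1-(T-k-1)β) - β²(T-k-1)) η_T = (1-(T-k)β) η_T. Downward induction on k concludes. -/

open Finset

lemma sum_range_linear_mul_pow (α : ℝ) (d : ℕ) :
    ∑ i ∈ range d, (1 - ((d : ℝ) - 1 - i) * (α - 1)) * α ^ i = d := by
  induction d with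
  | zero => simp
  | succ d ih =>
    have hgeom : (∑ i ∈ range d, α ^ i) * (α - 1) = α ^ d - 1 := geom_sum_mul α d
    calc ∑ i ∈ range (d + 1), (1 - (((d + 1 : ℕ) : ℝ) - 1 - i) * (α - 1)) * α ^ i
        = ∑ i ∈ range d, (1 - ((d : ℝ) - 1 - i) * (α - 1)) * α ^ i
          - (∑ i ∈ range d, α ^ i) * (α - 1) + α ^ d := by
          rw [sum_range_succ, sum_mul, ← sum_sub_distrib]
          push_cast
          congr 1
          · exact sum_congr rfl fun i _ => by ring
          · ring
      _ = (d + 1 : ℕ) := by rw [ih, hgeom]; push_cast; ring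

lemma sum_Icc_linear_mul_pow (α : ℝ) {k T : ℕ} (hk : k < T) :
    ∑ j ∈ Icc (k + 2) T, (1 - ((T : ℝ) - j) * (α - 1)) * α ^ (j - k - 2) = (T : ℝ) - k - 1 := by
  obtain ⟨d, rfl⟩ : ∃ d, T = k + 1 + d := ⟨T - k - 1, by omega⟩
  rw [← Ico_add_one_right_eq_Icc, sum_Ico_eq_sum_range,
    show k + 1 + d + 1 - (k + 2) = d by omega]
  calc ∑ i ∈ range d, (1 - (((k + 1 + d : ℕ) : ℝ) - ((k + 2 + i : ℕ) : ℝ)) * (α - 1))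
          * α ^ (k + 2 + i - k - 2)
      = ∑ i ∈ range d, (1 - ((d : ℝ) - 1 - i) * (α - 1)) * α ^ i :=
        sum_congr rfl fun i _ => by
          rw [show k + 2 + i - k - 2 = i by omega]; push_cast; ring
    _ = ((k + 1 + d : ℕ) : ℝ) - k - 1 := by rw [sum_range_linear_mul_pow]; push_cast; ring

theorem recursion_solution_general (α : ℝ) (T : ℕ) (η : ℕ → ℝ)
    (hsys : ∀ k, 1 ≤ k → k ≤ T - 1 →
      (1 - (α - 1)) * η (k + 1) - η k
        - (α - 1) ^ 2 * ∑ j ∈ Finset.Icc (k + 2) T, η j * α ^ (j - k - 2) = 0) :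
    ∀ k, 1 ≤ k → k ≤ T → η k = (1 - ((T : ℝ) - k) * (α - 1)) * η T := by
  intro k hk hkT
  induction hd : T - k using Nat.strong_induction_on generalizing k with
  | _ d ih =>
  rcases Nat.eq_zero_or_pos d with rfl | hd0
  · obtain rfl : k = T := by omega
    simp
  have htail : ∑ j ∈ Icc (k + 2) T, η j * α ^ (j - k - 2) = ((T : ℝ) - k - 1) * η T := by
    rw [← sum_Icc_linear_mul_pow α (show k < T by omega), sum_mul]
    refine sum_congr rfl fun j hj => ?_
    rw [mem_Icc] at hj
    rw [ih (T - j) (by omega) j (by omega) hj.2 rfl]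
    ring
  have hnext := ih (T - (k + 1)) (by omega) (k + 1) (by omega) (by omega) rfl
  have heq := hsys k hk (by omega)
  rw [htail, hnext] at heq
  push_cast at heq
  linear_combination -heq

/-- Solutions of the system (1-β)η_{k+1} - η_k - β² ∑_{j=k+2}^T η_j α^{j-k-2} = 0,
    k = 1,…,T-1, satisfy η_k = (1 - (T-k)β) η_T. -/
theorem recursion_solution (α : ℝ) (T : ℕ) (hT : 1 ≤ T) (η : ℕ → ℝ)
    (hsys : ∀ k, 1 ≤ k → k ≤ T - 1 →
      (1 - (α - 1)) * η (k + 1) - η k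
        - (α - 1) ^ 2 * ∑ j ∈ Finset.Icc (k + 2) T, η j * α ^ (j - k - 2) = 0) :
    ∀ k, 1 ≤ k → k ≤ T → η k = (1 - ((T : ℝ) - k) * (α - 1)) * η T :=
  recursion_solution_general α T η hsys
end
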